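/- The Laplace density p(θ) = (1/(2τ)) exp(−|θ|/τ) on ℝ is a variance-Gaussian mixture: p(θ) = ∫₀^∞ N(θ; 0, τ²λ) · exp(−λ/2)/2 · dλ, where N(θ; 0, σ²) denotes the Gaussian density with mean 0 and variance σ². Equivalently, ∫₀^∞ (1/√(2π τ² λ)) e^{−θ²/(2τ²λ)} (1/2) e^{−λ/2} dλ = (1/(2τ)) e^{−|θ|/τ}. -/

import Mathlib

/-!
Substituting `λ = t²` and writing `a = |θ|/τ`, the mixture integral becomes a multiple of
`∫₀^∞ exp(-(t² + a²/t²)/2) dt = e^{-a} ∫₀^∞ exp(-(t - a/t)²/2) dt`. The last integral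
is `√(2π)/2` by the Cauchy–Schlömilch substitution: `u = t - a/t` maps `(0, ∞)` bijectively
onto `ℝ` with `du = (1 + a/t²) dt`, and the involution `t ↦ a/t` shows that, for an even
integrand, the two parts `dt` and `a/t² dt` of this weight contribute equally.
-/

open MeasureTheory Real Set

section CauchySchlomilch

variable {E : Type*} [NormedAddCommGroup E] [NormedSpace ℝ E] {a : ℝ}

theorem hasDerivAt_sub_div (a : ℝ) {x : ℝ} (hx : x ≠ 0) :
    HasDerivAt (fun t : ℝ => t - a / t) (1 + a / x ^ 2) x := by
  have h : HasDerivAt (fun t => t - a * t⁻¹) (1 - a * -(x ^ 2)⁻¹) x :=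
    (hasDerivAt_id' x).sub ((hasDerivAt_inv hx).const_mul a)
  convert h using 1 <;> [simp only [div_eq_mul_inv]; ring]

theorem image_div_Ioi (ha : 0 < a) : (fun t : ℝ => a / t) '' Ioi 0 = Ioi 0 := by
  ext x
  refine ⟨fun ⟨t, ht, hx⟩ => hx ▸ div_pos ha ht, fun hx => ⟨a / x, div_pos ha hx, ?_⟩⟩
  field_simp [(mem_Ioi.mp hx).ne']

theorem injOn_div_Ioi (ha : a ≠ 0) : InjOn (fun t : ℝ => a / t) (Ioi 0) := by
  intro x hx y hy h
  simpa [div_eq_mul_inv, ha] using h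

theorem image_sub_div_Ioi (ha : 0 < a) : (fun t : ℝ => t - a / t) '' Ioi 0 = univ := by
  refine eq_univ_of_forall fun u => ?_
  have hs : √(u ^ 2 + 4 * a) ^ 2 = u ^ 2 + 4 * a := sq_sqrt (by positivity)
  have hu : |u| < √(u ^ 2 + 4 * a) := by
    rw [← sqrt_sq_eq_abs]
    exact sqrt_lt_sqrt (sq_nonneg u) (by linarith)
  -- the positive root of `t² - u t - a = 0`
  have ht : 0 < u + √(u ^ 2 + 4 * a) := by linarith [neg_abs_le u]
  refine ⟨(u + √(u ^ 2 + 4 * a)) / 2, mem_Ioi.mpr (by positivity), ?_⟩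
  field_simp [ht.ne']
  linear_combination hs

theorem injOn_sub_div_Ioi (ha : 0 ≤ a) : InjOn (fun t : ℝ => t - a / t) (Ioi 0) := by
  intro x hx y hy h
  rw [mem_Ioi] at hx hy
  have h' : (x - y) * (x * y + a) = 0 := by
    field_simp at h
    linear_combination h
  have hxy : x * y + a ≠ 0 := by positivity
  exact sub_eq_zero.mp ((mul_eq_zero.mp h').resolve_right hxy)

theorem integral_comp_sub_div_Ioi_eq_integral_div_sq_smul (ha : 0 < a) (g : ℝ → E) :
    ∫ t in Ioi 0, g (t - a / t) = ∫ t in Ioi 0, (a / t ^ 2) • g (a / t - t) := by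
  have h := integral_image_eq_integral_abs_deriv_smul measurableSet_Ioi
    (fun x hx => ((hasDerivAt_inv (mem_Ioi.mp hx).ne').const_mul a).hasDerivWithinAt)
    (injOn_div_Ioi ha.ne') (fun x => g (x - a / x))
  simp only [← div_eq_mul_inv] at h
  rw [image_div_Ioi ha] at h
  rw [h]
  refine setIntegral_congr_fun measurableSet_Ioi fun t ht => ?_
  have ht : 0 < t := ht
  congr 1
  · rw [mul_neg, abs_neg, abs_of_pos (by positivity), div_eq_mul_inv]
  · field_simp

theorem integral_comp_sub_div_Ioi (ha : 0 < a) {g : ℝ → E} (hg : Integrable g)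
    (hg_even : g.Even) :
    ∫ t in Ioi 0, g (t - a / t) = (2 : ℝ)⁻¹ • ∫ x, g x := by
  have hderiv : ∀ x ∈ Ioi (0 : ℝ),
      HasDerivWithinAt (fun t => t - a / t) (1 + a / x ^ 2) (Ioi 0) x :=
    fun x hx => (hasDerivAt_sub_div a (mem_Ioi.mp hx).ne').hasDerivWithinAt
  have habs : ∀ t : ℝ, |1 + a / t ^ 2| = 1 + a / t ^ 2 :=
    fun t => abs_of_pos (by positivity)
  have hweighted : IntegrableOn (fun t => (1 + a / t ^ 2) • g (t - a / t)) (Ioi 0) := by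
    have h := (integrableOn_image_iff_integrableOn_abs_deriv_smul measurableSet_Ioi hderiv
      (injOn_sub_div_Ioi ha.le) g).mp (by rw [image_sub_div_Ioi ha]; exact hg.integrableOn)
    simpa only [habs] using h
  have hcomp : IntegrableOn (fun t => g (t - a / t)) (Ioi 0) := by
    refine Integrable.mono hweighted ?_ (ae_of_all _ fun t => ?_)
    · have hmeas : AEStronglyMeasurable (fun t => (1 + a / t ^ 2)⁻¹ • (1 + a / t ^ 2) •
          g (t - a / t)) (volume.restrict (Ioi 0)) :=
        (ContinuousOn.aestronglyMeasurable (fun t ht => by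
          have : t ≠ 0 := (mem_Ioi.mp ht).ne'
          fun_prop (disch := positivity)) measurableSet_Ioi).smul hweighted.aestronglyMeasurable
      refine hmeas.congr (ae_of_all _ fun t => ?_)
      simp only [inv_smul_smul₀ (ne_of_gt (by positivity : 0 < 1 + a / t ^ 2))]
    · rw [norm_smul, Real.norm_eq_abs, habs]
      exact le_mul_of_one_le_left (norm_nonneg _) (le_add_of_nonneg_right (by positivity))
  have hreflected :
      ∫ t in Ioi 0, (a / t ^ 2) • g (t - a / t) = ∫ t in Ioi 0, g (t - a / t) := by
    rw [integral_comp_sub_div_Ioi_eq_integral_div_sq_smul ha]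
    refine setIntegral_congr_fun measurableSet_Ioi fun t _ => ?_
    rw [← hg_even, neg_sub]
  have hsplit : (fun t => (1 + a / t ^ 2) • g (t - a / t))
      = fun t => g (t - a / t) + (a / t ^ 2) • g (t - a / t) := by
    funext t; rw [add_smul, one_smul]
  have htotal : ∫ t in Ioi 0, (1 + a / t ^ 2) • g (t - a / t) = ∫ x, g x := by
    have h := integral_image_eq_integral_abs_deriv_smul measurableSet_Ioi hderiv
      (injOn_sub_div_Ioi ha.le) g
    rw [image_sub_div_Ioi ha, setIntegral_univ] at h
    simpa only [habs] using h.symm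
  rw [hsplit, integral_add hcomp ((hweighted.sub hcomp).congr_fun (fun t _ => by
    simp [add_smul]) measurableSet_Ioi), hreflected, ← two_smul ℝ] at htotal
  rw [← htotal, inv_smul_smul₀ two_ne_zero]

end CauchySchlomilch

theorem integral_exp_neg_sq_sub_div_Ioi {a : ℝ} (ha : 0 ≤ a) :
    ∫ t in Ioi 0, exp (-(t - a / t) ^ 2 / 2) = √(2 * π) / 2 := by
  have hπ : π / (1 / 2) = 2 * π := by ring
  have hgauss : (fun x : ℝ => exp (-(1 / 2) * x ^ 2)) = fun x => exp (-x ^ 2 / 2) := by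
    funext x; ring_nf
  rcases ha.eq_or_lt with rfl | ha
  · simp only [zero_div, sub_zero]
    rw [← hgauss, integral_gaussian_Ioi, hπ]
  · rw [integral_comp_sub_div_Ioi ha (g := fun x => exp (-x ^ 2 / 2))
      (hgauss ▸ integrable_exp_neg_mul_sq (by norm_num)) (fun x => by simp),
      ← hgauss, integral_gaussian, hπ, smul_eq_mul, inv_mul_eq_div]

theorem integral_exp_div_sqrt_Ioi {a : ℝ} (ha : 0 ≤ a) :
    ∫ x in Ioi 0, exp (-(a ^ 2 / x + x) / 2) / √x = √(2 * π) * exp (-a) := by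
  rw [← integral_comp_rpow_Ioi_of_pos two_pos]
  -- after `x = t²`, complete the square: `a²/t² + t² = (t - a/t)² + 2a`
  have h : ∀ t ∈ Ioi (0 : ℝ), ((2 : ℝ) * t ^ ((2 : ℝ) - 1)) •
      (exp (-(a ^ 2 / t ^ (2 : ℝ) + t ^ (2 : ℝ)) / 2) / √(t ^ (2 : ℝ)))
        = 2 * exp (-a) * exp (-(t - a / t) ^ 2 / 2) := by
    intro t ht
    have ht : 0 < t := ht
    rw [rpow_two, sqrt_sq ht.le, show (2 : ℝ) - 1 = 1 by norm_num, rpow_one,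
      smul_eq_mul, mul_assoc, mul_div_cancel₀ _ ht.ne', mul_assoc, ← exp_add]
    congr 2
    field_simp
    ring
  rw [setIntegral_congr_fun measurableSet_Ioi h, integral_const_mul,
    integral_exp_neg_sq_sub_div_Ioi ha]
  ring

/-- The Laplace density is a variance mixture of zero-mean Gaussians with an
exponential mixing density:
`∫₀^∞ N(θ; 0, τ²λ) · (1/2)e^{-λ/2} dλ = (1/(2τ)) e^{-|θ|/τ}`. -/
theorem laplace_is_variance_gaussian_mixture (τ θ : ℝ) (hτ : 0 < τ) :
    ∫ lam in Set.Ioi (0:ℝ),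
        (1 / Real.sqrt (2 * π * (τ^2 * lam))) * Real.exp (-θ^2 / (2 * (τ^2 * lam)))
          * ((1/2) * Real.exp (-lam / 2))
      = (1 / (2 * τ)) * Real.exp (-|θ| / τ) := by
  have hintegrand : ∀ lam ∈ Ioi (0 : ℝ),
      (1 / √(2 * π * (τ ^ 2 * lam))) * exp (-θ ^ 2 / (2 * (τ ^ 2 * lam)))
          * ((1 / 2) * exp (-lam / 2))
        = (2 * τ * √(2 * π))⁻¹ * (exp (-((|θ| / τ) ^ 2 / lam + lam) / 2) / √lam) := by
    intro lam hlam
    have hlam : 0 < lam := hlam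
    have hsqrt : √(2 * π * (τ ^ 2 * lam)) = √(2 * π) * τ * √lam := by
      rw [sqrt_mul (by positivity), sqrt_mul (sq_nonneg τ), sqrt_sq hτ.le, mul_assoc]
    have hexp : exp (-θ ^ 2 / (2 * (τ ^ 2 * lam))) * exp (-lam / 2)
        = exp (-((|θ| / τ) ^ 2 / lam + lam) / 2) := by
      rw [← exp_add, div_pow, sq_abs]
      congr 1
      field_simp
      ring
    rw [hsqrt, ← hexp]
    field_simp
  rw [setIntegral_congr_fun measurableSet_Ioi hintegrand, integral_const_mul,
    integral_exp_div_sqrt_Ioi (by positivity), neg_div]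
  field_simp
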